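/- arXiv:1204.6620 — 9 statements merged into one kernel-verified Lean document; each statement's English description precedes it below -/
import Mathlib

section
/- Let (Ω, F, P) be a probability space, let α > 0, and for every real p ≥ 1 let c_p ≥ 0 be a constant. Let (Z_n)_{n ∈ ℕ} be a sequence of real-valued random variables such that (E|Z_n|^p)^{1/p} ≤ c_p · n^{−α} for all real p ≥ 1 and all n ∈ ℕ. Then for every ε > 0 there exists a finite, non-negative random variable η_ε on Ω such that almost surely |Z_n| ≤ η_ε · n^{−α+ε} for all n ∈ ℕ. -/
open MeasureTheory Filter

/-- Borel–Cantelli-type lemma (Kloeden–Neuenkirch): if the `p`-th mean of `Z n` decays like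
`n ^ (-α)` for every `p ≥ 1`, then for every `ε > 0` there is a finite nonnegative random
variable `η` with `|Z n| ≤ η * n ^ (-α + ε)` for all `n`, almost surely. -/
theorem borel_cantelli_type_pathwise_rate
    {Ω : Type*} [MeasurableSpace Ω] (P : Measure Ω) [IsProbabilityMeasure P]
    (α : ℝ) (hα : 0 < α) (c : ℝ → ℝ) (hc : ∀ p : ℝ, 1 ≤ p → 0 ≤ c p)
    (Z : ℕ → Ω → ℝ) (hZmeas : ∀ n, Measurable (Z n))
    (hZ : ∀ p : ℝ, 1 ≤ p → ∀ n : ℕ,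
      (∫⁻ ω, ENNReal.ofReal (|Z n ω| ^ p) ∂P) ^ (1 / p)
        ≤ ENNReal.ofReal (c p * (n : ℝ) ^ (-α))) :
    ∀ ε : ℝ, 0 < ε → ∃ η : Ω → ℝ, Measurable η ∧ (∀ ω, 0 ≤ η ω) ∧
      ∀ᵐ ω ∂P, ∀ n : ℕ, |Z n ω| ≤ η ω * (n : ℝ) ^ (-α + ε) := by
  intro ε hε
  set p : ℝ := 1 + 1/ε with hp_def
  have hp1 : (1:ℝ) ≤ p := by
    have : 0 < 1/ε := by positivity
    rw [hp_def]; linarith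
  have hp0 : 0 < p := lt_of_lt_of_le one_pos hp1
  have hpε : 1 < ε * p := by
    have : ε * p = ε + 1 := by rw [hp_def, mul_add, mul_one, mul_one_div_cancel (ne_of_gt hε)]
    linarith
  -- moment bounds without the root
  have hmom : ∀ n : ℕ, (∫⁻ ω, ENNReal.ofReal (|Z n ω| ^ p) ∂P)
      ≤ ENNReal.ofReal (c p * (n : ℝ) ^ (-α)) ^ p := by
    intro n
    have h := hZ p hp1 n
    have := ENNReal.rpow_le_rpow h (le_of_lt hp0)
    rwa [← ENNReal.rpow_mul, one_div, inv_mul_cancel₀ (ne_of_gt hp0),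
      ENNReal.rpow_one] at this
  -- Z 0 = 0 a.e.
  have hZ0 : ∀ᵐ ω ∂P, Z 0 ω = 0 := by
    have h := hZ p hp1 0
    rw [Nat.cast_zero, Real.zero_rpow (by linarith : -α ≠ 0), mul_zero,
      ENNReal.ofReal_zero] at h
    have h0 : (∫⁻ ω, ENNReal.ofReal (|Z 0 ω| ^ p) ∂P) = 0 := by
      have := le_antisymm h (by simp)
      rcases (ENNReal.rpow_eq_zero_iff.mp this) with ⟨h1, _⟩ | ⟨_, h2⟩
      · exact h1
      · exfalso; have : (0:ℝ) < 1/p := by positivity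
        linarith [h2]
    have hmeas : Measurable fun ω => ENNReal.ofReal (|Z 0 ω| ^ p) :=
      (((hZmeas 0).abs).pow_const p).ennreal_ofReal
    have := (lintegral_eq_zero_iff hmeas).mp h0
    filter_upwards [this] with ω hω
    simp only [Pi.zero_apply, ENNReal.ofReal_eq_zero] at hω
    by_contra hne
    have habs : 0 < |Z 0 ω| := abs_pos.mpr hne
    have : 0 < |Z 0 ω| ^ p := Real.rpow_pos_of_pos habs p
    linarith
  -- define g
  set g : Ω → ENNReal := fun ω => ∑' m : ℕ,
    ENNReal.ofReal (|Z (m+1) ω| ^ p) * ENNReal.ofReal (((m:ℝ)+1) ^ ((α - ε) * p))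
    with hg_def
  have hgmeas : Measurable g := by
    apply Measurable.ennreal_tsum
    intro m
    exact ((((hZmeas (m+1)).abs).pow_const p).ennreal_ofReal).mul measurable_const
  -- integral of g is finite
  have hint : (∫⁻ ω, g ω ∂P) ≠ ⊤ := by
    rw [hg_def]
    simp only
    rw [lintegral_tsum (f := fun m ω => ENNReal.ofReal (|Z (m+1) ω| ^ p) *
          ENNReal.ofReal (((m:ℝ)+1) ^ ((α - ε) * p))) (fun m =>
      (((((hZmeas (m+1)).abs).pow_const p).ennreal_ofReal).mul measurable_const).aemeasurable)]
    have hbound : ∀ m : ℕ,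
        (∫⁻ ω, ENNReal.ofReal (|Z (m+1) ω| ^ p) * ENNReal.ofReal (((m:ℝ)+1) ^ ((α - ε) * p)) ∂P)
        ≤ ENNReal.ofReal ((c p) ^ p * ((m:ℝ)+1) ^ (-(ε * p))) := by
      intro m
      rw [lintegral_mul_const _ (((hZmeas (m+1)).abs).pow_const p).ennreal_ofReal]
      have hM : (0:ℝ) < (m:ℝ) + 1 := by positivity
      calc (∫⁻ ω, ENNReal.ofReal (|Z (m+1) ω| ^ p) ∂P) * ENNReal.ofReal (((m:ℝ)+1) ^ ((α - ε) * p))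
          ≤ ENNReal.ofReal (c p * ((m+1 : ℕ) : ℝ) ^ (-α)) ^ p *
            ENNReal.ofReal (((m:ℝ)+1) ^ ((α - ε) * p)) :=
            mul_le_mul_left (hmom (m+1)) _
        _ = ENNReal.ofReal ((c p) ^ p * ((m:ℝ)+1) ^ (-(ε * p))) := by
            rw [ENNReal.ofReal_rpow_of_nonneg
                (mul_nonneg (hc p hp1) (Real.rpow_nonneg (by positivity) _)) (le_of_lt hp0),
              ← ENNReal.ofReal_mul
                (Real.rpow_nonneg (mul_nonneg (hc p hp1) (Real.rpow_nonneg (by positivity) _)) _)]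
            congr 1
            push_cast
            rw [Real.mul_rpow (hc p hp1) (Real.rpow_nonneg (le_of_lt hM) _),
              ← Real.rpow_mul (le_of_lt hM), mul_assoc, ← Real.rpow_add hM]
            ring_nf
    have hsummable : Summable (fun m : ℕ => (c p) ^ p * ((m:ℝ)+1) ^ (-(ε * p))) := by
      apply Summable.mul_left
      have h1 : Summable (fun n : ℕ => (n:ℝ) ^ (-(ε * p))) :=
        Real.summable_nat_rpow.mpr (by linarith)
      have h2 := h1.comp_injective (add_left_injective 1)
      refine h2.congr fun m => ?_
      simp [Function.comp]
    have hsum : (∑' m : ℕ, ENNReal.ofReal ((c p) ^ p * ((m:ℝ)+1) ^ (-(ε * p)))) ≠ ⊤ := by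
      rw [← ENNReal.ofReal_tsum_of_nonneg (fun m => mul_nonneg (Real.rpow_nonneg (hc p hp1) _) (Real.rpow_nonneg (by positivity) _)) hsummable]
      exact ENNReal.ofReal_ne_top
    exact ne_top_of_le_ne_top hsum (ENNReal.tsum_le_tsum hbound)
  -- g finite a.e.
  have hgfin : ∀ᵐ ω ∂P, g ω < ⊤ := ae_lt_top hgmeas hint
  -- define η
  refine ⟨fun ω => (g ω).toReal ^ (1/p), (hgmeas.ennreal_toReal).pow_const _,
    fun ω => Real.rpow_nonneg ENNReal.toReal_nonneg _, ?_⟩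
  filter_upwards [hZ0, hgfin] with ω h0 hfin
  intro n
  have hηnn : (0:ℝ) ≤ (g ω).toReal ^ (1/p) := Real.rpow_nonneg ENNReal.toReal_nonneg _
  cases n with
  | zero =>
      rw [h0]
      simp only [abs_zero, Nat.cast_zero]
      exact mul_nonneg hηnn (Real.rpow_nonneg le_rfl _)
  | succ m =>
      have hM : (0:ℝ) < (m:ℝ) + 1 := by positivity
      have hterm : ENNReal.ofReal (|Z (m+1) ω| ^ p) *
          ENNReal.ofReal (((m:ℝ)+1) ^ ((α - ε) * p)) ≤ g ω := by
        rw [hg_def]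
        exact ENNReal.le_tsum m
      rw [← ENNReal.ofReal_mul (by positivity)] at hterm
      have hreal : |Z (m+1) ω| ^ p * ((m:ℝ)+1) ^ ((α - ε) * p) ≤ (g ω).toReal :=
        (ENNReal.ofReal_le_iff_le_toReal hfin.ne).mp hterm
      have hcomb : (|Z (m+1) ω| * ((m:ℝ)+1) ^ (α - ε)) ^ p ≤ (g ω).toReal := by
        rwa [Real.mul_rpow (abs_nonneg _) (Real.rpow_nonneg (le_of_lt hM) _),
          ← Real.rpow_mul (le_of_lt hM)]
      have hkey : |Z (m+1) ω| * ((m:ℝ)+1) ^ (α - ε) ≤ (g ω).toReal ^ (1/p) := by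
        have := Real.rpow_le_rpow (by positivity) hcomb (by positivity : (0:ℝ) ≤ 1/p)
        rwa [← Real.rpow_mul (by positivity), mul_one_div, div_self (ne_of_gt hp0),
          Real.rpow_one] at this
      have := mul_le_mul_of_nonneg_right hkey
        (Real.rpow_nonneg (le_of_lt hM) (-α + ε))
      rw [mul_assoc, ← Real.rpow_add hM] at this
      have hexp : α - ε + (-α + ε) = 0 := by ring
      rw [hexp, Real.rpow_zero, mul_one] at this
      push_cast
      exact this
end

section
/- Fix an integer n ≥ 4 and define the real sequence (x_k)_{k ≥ 0} by x_0 = n and x_{k+1} = x_k (1 − x_k²/n) for k ≥ 0. Then |x_k| ≥ n^{2^{k−1}} for every integer k ≥ 1. -/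
/-- The explicit Euler scheme with step size `1/n` for `dX = -X³ dt`, started at `x₀ = n ≥ 4`,
grows double-exponentially: `|x_k| ≥ n ^ (2 ^ (k - 1))` for all `k ≥ 1`. -/
theorem euler_cubic_double_exponential_growth
    (n : ℕ) (hn : 4 ≤ n) (x : ℕ → ℝ)
    (h0 : x 0 = n)
    (hrec : ∀ k : ℕ, x (k + 1) = x k * (1 - (x k) ^ 2 / n)) :
    ∀ k : ℕ, 1 ≤ k → (n : ℝ) ^ (2 ^ (k - 1)) ≤ |x k| := by
  have hN4 : (4:ℝ) ≤ (n:ℝ) := by exact_mod_cast hn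
  have hN0 : (0:ℝ) < (n:ℝ) := by linarith
  have aux : ∀ k : ℕ, 1 ≤ k → 2 * (n:ℝ) ^ (2 ^ (k-1)) ≤ |x k| := by
    intro k hk
    induction k, hk using Nat.le_induction with
    | base =>
      have h2 : x 1 = (n:ℝ) * (1 - (n:ℝ)) := by
        rw [hrec 0, h0]; field_simp
      have hle : x 1 ≤ 0 := by rw [h2]; nlinarith
      rw [abs_of_nonpos hle, h2]
      simp only [Nat.sub_self, pow_zero, pow_one]
      nlinarith
    | succ k hk ih =>
      set M : ℝ := (n:ℝ) ^ (2 ^ (k-1)) with hM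
      have hNM : (n:ℝ) ≤ M := by
        calc (n:ℝ) = (n:ℝ)^1 := (pow_one _).symm
        _ ≤ M := pow_le_pow_right₀ (by linarith) Nat.one_le_two_pow
      have hM4 : (4:ℝ) ≤ M := le_trans hN4 hNM
      have ha : 2*M ≤ |x k| := ih
      have hsq : 4*M^2 ≤ |x k|^2 := by nlinarith
      have hdiv : 4*M ≤ |x k|^2 / n := by
        rw [le_div_iff₀ hN0]; nlinarith
      have hx2 : (x k)^2 = |x k|^2 := (sq_abs _).symm
      have hge1 : 1 ≤ (x k)^2 / n := by
        rw [hx2]; linarith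
      have habs : |x (k+1)| = |x k| * (|x k|^2/n - 1) := by
        rw [hrec k, abs_mul]
        congr 1
        rw [abs_of_nonpos (by linarith), hx2]; ring
      have hpow : (n:ℝ)^(2^k) = M^2 := by
        rw [hM, ← pow_mul, ← pow_succ, Nat.sub_add_cancel hk]
      have : 2*M * (2*M) ≤ |x (k+1)| := by
        rw [habs]
        apply mul_le_mul ha (by linarith) (by linarith) (by linarith)
      calc 2 * (n:ℝ) ^ (2 ^ (k+1-1)) = 2 * M^2 := by
            rw [Nat.add_sub_cancel, hpow]
        _ ≤ 2*M * (2*M) := by nlinarith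
        _ ≤ |x (k+1)| := this
  intro k hk
  have h := aux k hk
  have : (0:ℝ) ≤ (n:ℝ) ^ (2 ^ (k-1)) := by positivity
  linarith
end

section
/- Let d ∈ ℕ, let a : ℝ^d → ℝ^d be continuous, and suppose there is a constant L₁ > 0 such that ⟨x − y, a(x) − a(y)⟩ ≤ L₁ |x − y|² for all x, y ∈ ℝ^d, where ⟨·,·⟩ is the Euclidean inner product and |·| the Euclidean norm. Then for every Δ > 0 with Δ·L₁ < 1 and every x ∈ ℝ^d there exists a unique y ∈ ℝ^d satisfying y = x + a(y)·Δ. -/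
open scoped RealInnerProductSpace
open MeasureTheory Filter Metric Bornology Function
open scoped Topology Convolution

section Aux

variable {E : Type*} [NormedAddCommGroup E] [InnerProductSpace ℝ E]

/-- Strong monotonicity of `y ↦ y - Δ • b y` from the one-sided Lipschitz condition. -/
lemma osl_inner_expand {b : E → E} {L₁ Δ : ℝ} (hΔ : 0 ≤ Δ)
    (hOSL : ∀ x y : E, ⟪x - y, b x - b y⟫ ≤ L₁ * ‖x - y‖ ^ 2) (u v : E) :
    (1 - Δ * L₁) * ‖u - v‖ ^ 2 ≤ ⟪u - v, (u - Δ • b u) - (v - Δ • b v)⟫ := by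
  have h := hOSL u v
  have he : (u - Δ • b u) - (v - Δ • b v) = (u - v) - Δ • (b u - b v) := by
    rw [smul_sub]; abel
  rw [he, inner_sub_right, real_inner_smul_right, real_inner_self_eq_norm_sq]
  nlinarith [mul_le_mul_of_nonneg_left h hΔ]

lemma osl_norm_expand {b : E → E} {L₁ Δ : ℝ} (hΔ : 0 ≤ Δ)
    (hOSL : ∀ x y : E, ⟪x - y, b x - b y⟫ ≤ L₁ * ‖x - y‖ ^ 2) (u v : E) :
    (1 - Δ * L₁) * ‖u - v‖ ≤ ‖(u - Δ • b u) - (v - Δ • b v)‖ := by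
  rcases eq_or_ne u v with rfl | hne
  · simp
  · have h1 := osl_inner_expand hΔ hOSL u v
    have h2 := real_inner_le_norm (u - v) ((u - Δ • b u) - (v - Δ • b v))
    have hn : 0 < ‖u - v‖ := by
      simpa [sub_ne_zero] using (norm_pos_iff).2 (sub_ne_zero.2 hne)
    have hnn : (0:ℝ) ≤ ‖(u - Δ • b u) - (v - Δ • b v)‖ := norm_nonneg _
    nlinarith

/-- The one-sided Lipschitz condition passes to the derivative. -/
lemma osl_fderiv {b : E → E} {L₁ : ℝ}
    (hOSL : ∀ x y : E, ⟪x - y, b x - b y⟫ ≤ L₁ * ‖x - y‖ ^ 2)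
    {y : E} {A : E →L[ℝ] E} (hA : HasFDerivAt b A y) (v : E) :
    ⟪v, A v⟫ ≤ L₁ * ‖v‖ ^ 2 := by
  set f : ℝ → E := fun t => b (y + t • v) with hf
  have hline : HasDerivAt f (A v) 0 := by
    have h1 : HasDerivAt (fun t : ℝ => y + t • v) v 0 := by
      simpa using ((hasDerivAt_id (0:ℝ)).smul_const v).const_add y
    have hA' : HasFDerivAt b A (y + (0:ℝ) • v) := by simpa using hA
    simpa [hf, Function.comp_def] using hA'.comp_hasDerivAt 0 h1
  have hslope : Tendsto (slope f 0) (𝓝[>] (0:ℝ)) (𝓝 (A v)) :=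
    (hasDerivAt_iff_tendsto_slope.1 hline).mono_left
      (nhdsWithin_mono _ (fun t ht => ne_of_gt ht))
  have hT : Tendsto (fun t : ℝ => ⟪v, slope f 0 t⟫) (𝓝[>] (0:ℝ)) (𝓝 ⟪v, A v⟫) :=
    (Filter.Tendsto.inner tendsto_const_nhds hslope)
  refine le_of_tendsto hT (eventually_nhdsWithin_of_forall ?_)
  intro t ht
  have ht0 : (0:ℝ) < t := ht
  have key : ⟪t • v, b (y + t • v) - b y⟫ ≤ L₁ * (t * ‖v‖) ^ 2 := by
    have := hOSL (y + t • v) y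
    simpa [add_sub_cancel_left, norm_smul, abs_of_pos ht0] using this
  have hs : slope f 0 t = t⁻¹ • (b (y + t • v) - b y) := by
    rw [hf, slope_def_module]; simp
  rw [hs, real_inner_smul_right]
  rw [real_inner_smul_left] at key
  have h2 : ⟪v, b (y + t • v) - b y⟫ ≤ L₁ * t * ‖v‖ ^ 2 := by
    have := (mul_le_mul_iff_of_pos_left ht0).1 (by nlinarith : t * ⟪v, b (y + t • v) - b y⟫ ≤ t * (L₁ * t * ‖v‖ ^ 2))
    exact this
  calc t⁻¹ * ⟪v, b (y + t • v) - b y⟫ ≤ t⁻¹ * (L₁ * t * ‖v‖ ^ 2) := by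
        exact mul_le_mul_of_nonneg_left h2 (by positivity)
    _ = L₁ * ‖v‖ ^ 2 := by field_simp

end Aux

section Surj

variable {E : Type*} [NormedAddCommGroup E] [InnerProductSpace ℝ E] [FiniteDimensional ℝ E]

/-- Surjectivity of `y ↦ y - Δ • b y` for a `C¹` one-sided Lipschitz drift `b`. -/
lemma osl_smooth_surj {b : E → E} (hb : ContDiff ℝ 1 b) {L₁ Δ : ℝ} (hΔ : 0 < Δ)
    (hΔL : Δ * L₁ < 1)
    (hOSL : ∀ x y : E, ⟪x - y, b x - b y⟫ ≤ L₁ * ‖x - y‖ ^ 2) (x : E) :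
    ∃ y : E, y - Δ • b y = x := by
  set F : E → E := fun y => y - Δ • b y with hF
  have hFc : ContDiff ℝ 1 F := contDiff_id.sub (hb.const_smul Δ)
  have hdiff : ∀ y : E, HasFDerivAt b (fderiv ℝ b y) y := fun y =>
    (hb.differentiable one_ne_zero y).hasFDerivAt
  set DF : E → E →L[ℝ] E := fun y => ContinuousLinearMap.id ℝ E - Δ • fderiv ℝ b y with hDF
  have hDFd : ∀ y : E, HasFDerivAt F (DF y) y := fun y =>
    (hasFDerivAt_id y).sub ((hdiff y).const_smul Δ)
  have hinj : ∀ y : E, Function.Injective (DF y) := by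
    intro y u v huv
    by_contra hne
    have hvne : u - v ≠ 0 := sub_ne_zero.2 hne
    have hA := osl_fderiv hOSL (hdiff y) (u - v)
    have h0 : (DF y) (u - v) = 0 := by rw [map_sub, huv, sub_self]
    have h1 : (u - v) - Δ • (fderiv ℝ b y (u - v)) = 0 := by
      simpa [hDF, ContinuousLinearMap.sub_apply, ContinuousLinearMap.smul_apply] using h0
    have h2 : (u - v : E) = Δ • (fderiv ℝ b y (u - v)) := by
      rwa [sub_eq_zero] at h1
    have h3 : ‖u - v‖ ^ 2 = Δ * ⟪u - v, fderiv ℝ b y (u - v)⟫ := by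
      rw [← real_inner_self_eq_norm_sq]
      nth_rewrite 2 [h2]
      rw [real_inner_smul_right]
    have hnp : 0 < ‖u - v‖ ^ 2 := pow_pos (norm_pos_iff.2 hvne) 2
    nlinarith [mul_le_mul_of_nonneg_left hA (le_of_lt hΔ)]
  have hbij : ∀ y : E, Function.Bijective (DF y) := fun y =>
    ⟨hinj y, LinearMap.injective_iff_surjective.1 (hinj y)⟩
  set eqv : E → E ≃L[ℝ] E := fun y =>
    (LinearEquiv.ofBijective ((DF y : E →L[ℝ] E) : E →ₗ[ℝ] E) (hbij y)).toContinuousLinearEquiv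
    with heqv
  have hcoe : ∀ y : E, ((eqv y : E ≃L[ℝ] E) : E →L[ℝ] E) = DF y := by
    intro y; ext v; rfl
  have hstrict : ∀ y : E, HasStrictFDerivAt F ((eqv y : E ≃L[ℝ] E) : E →L[ℝ] E) y := by
    intro y
    rw [hcoe y]
    exact (hFc.contDiffAt).hasStrictFDerivAt' (hDFd y) one_ne_zero
  have hopen : IsOpenMap F := isOpenMap_of_hasStrictFDerivAt_equiv hstrict
  have hexp : ∀ u v : E, (1 - Δ * L₁) * ‖u - v‖ ≤ ‖F u - F v‖ := fun u v =>
    osl_norm_expand hΔ.le hOSL u v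
  have hcpos : (0:ℝ) < 1 - Δ * L₁ := by linarith
  have hclosed : IsClosed (Set.range F) := by
    refine IsSeqClosed.isClosed ?_
    intro u z hu hz
    choose w hw using hu
    have hcau : CauchySeq u := hz.cauchySeq
    have hwcau : CauchySeq w := by
      rw [Metric.cauchySeq_iff] at hcau ⊢
      intro ε hε
      obtain ⟨N, hN⟩ := hcau ((1 - Δ * L₁) * ε) (mul_pos hcpos hε)
      refine ⟨N, fun m hm n hn => ?_⟩
      have h1 := hexp (w m) (w n)
      rw [hw m, hw n] at h1
      have h2 := hN m hm n hn
      rw [dist_eq_norm] at h2 ⊢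
      nlinarith
    obtain ⟨yl, hyl⟩ := cauchySeq_tendsto_of_complete hwcau
    have hFt : Tendsto (fun n => F (w n)) atTop (𝓝 (F yl)) :=
      ((hFc.continuous.tendsto yl).comp hyl)
    have hz' : z = F yl := tendsto_nhds_unique (by simpa [hw] using hFt) hz |>.symm
    exact ⟨yl, hz'.symm⟩
  haveI : PreconnectedSpace E := ⟨(convex_univ : Convex ℝ (Set.univ : Set E)).isPreconnected⟩
  have huniv : Set.range F = Set.univ :=
    IsClopen.eq_univ ⟨hclosed, hopen.isOpen_range⟩ ⟨F 0, Set.mem_range_self 0⟩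
  have : x ∈ Set.range F := huniv ▸ Set.mem_univ x
  exact this

end Surj

open ContinuousLinearMap in
/-- Well-definedness of the (split-step) backward Euler scheme: under a one-sided Lipschitz
condition on the drift `a` with constant `L₁`, for every step size `Δ` with `Δ·L₁ < 1` and every
`x` the implicit equation `y = x + Δ • a y` has a unique solution. -/
theorem implicit_euler_step_exists_unique
    (d : ℕ) (a : EuclideanSpace ℝ (Fin d) → EuclideanSpace ℝ (Fin d))
    (ha : Continuous a) (L₁ : ℝ) (hL₁ : 0 < L₁)
    (hOSL : ∀ x y : EuclideanSpace ℝ (Fin d), ⟪x - y, a x - a y⟫ ≤ L₁ * ‖x - y‖ ^ 2) :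
    ∀ Δ : ℝ, 0 < Δ → Δ * L₁ < 1 →
      ∀ x : EuclideanSpace ℝ (Fin d), ∃! y : EuclideanSpace ℝ (Fin d), y = x + Δ • a y := by
  intro Δ hΔ hΔL x
  let E := EuclideanSpace ℝ (Fin d)
  have hcpos : (0:ℝ) < 1 - Δ * L₁ := by linarith
  -- the family of mollifiers
  set φ : ℕ → ContDiffBump (0 : E) := fun n =>
    ⟨((n:ℝ)+1)⁻¹/2, ((n:ℝ)+1)⁻¹, by positivity, half_lt_self (by positivity)⟩ with hφdef
  have hrout : Tendsto (fun n => (φ n).rOut) atTop (𝓝 0) := by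
    simpa [hφdef] using tendsto_one_div_add_atTop_nhds_zero_nat (𝕜 := ℝ)
  -- the mollified drifts
  set an : ℕ → E → E := fun n => (φ n).normed volume ⋆[lsmul ℝ ℝ, volume] a with han
  have hsmooth : ∀ n, ContDiff ℝ 1 (an n) := fun n =>
    (φ n).hasCompactSupport_normed.contDiff_convolution_left (lsmul ℝ ℝ)
      ((φ n).contDiff_normed (μ := volume) (n := 1)) ha.locallyIntegrable
  -- the mollified drifts satisfy the same one-sided Lipschitz condition
  have hOSLn : ∀ n (u v : E), ⟪u - v, an n u - an n v⟫ ≤ L₁ * ‖u - v‖ ^ 2 := by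
    intro n u v
    set ρ := (φ n).normed (volume : Measure E) with hρ
    have hρc : Continuous ρ := (φ n).continuous_normed
    have hint : ∀ w : E, Integrable (fun t => ρ t • a (w - t)) volume := by
      intro w
      apply Continuous.integrable_of_hasCompactSupport
      · exact hρc.smul (ha.comp (continuous_const.sub continuous_id))
      · exact ((φ n).hasCompactSupport_normed).smul_right
    have hconv : ∀ w : E, an n w = ∫ t, ρ t • a (w - t) := by
      intro w
      simp only [han, convolution_def, lsmul_apply, hρ]
    have hint2 : Integrable (fun t => ρ t • (a (u - t) - a (v - t))) volume := by
      simp only [smul_sub]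
      exact (hint u).sub (hint v)
    have key : an n u - an n v = ∫ t, ρ t • (a (u - t) - a (v - t)) := by
      rw [hconv u, hconv v, ← integral_sub (hint u) (hint v)]
      simp [smul_sub]
    rw [key, ← integral_inner hint2 (u - v)]
    have hmono : ∀ t : E, ⟪u - v, ρ t • (a (u - t) - a (v - t))⟫ ≤ ρ t * (L₁ * ‖u - v‖ ^ 2) := by
      intro t
      rw [real_inner_smul_right]
      refine mul_le_mul_of_nonneg_left ?_ ((φ n).nonneg_normed t)
      have h := hOSL (u - t) (v - t)
      simpa [sub_sub_sub_cancel_right] using h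
    calc ∫ t, ⟪u - v, ρ t • (a (u - t) - a (v - t))⟫
        ≤ ∫ t, ρ t * (L₁ * ‖u - v‖ ^ 2) :=
          integral_mono (hint2.const_inner (u - v)) (((φ n).integrable_normed).mul_const _) hmono
      _ = L₁ * ‖u - v‖ ^ 2 := by
          rw [integral_mul_const, (φ n).integral_normed, one_mul]
    -- done
  -- solve the regularized problems
  have hsol : ∀ n, ∃ y : E, y - Δ • an n y = x := fun n =>
    osl_smooth_surj (hsmooth n) hΔ hΔL (hOSLn n) x
  choose y hy using hsol
  -- the approximate solutions are bounded
  have h0 : Tendsto (fun n => an n 0) atTop (𝓝 (a 0)) :=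
    ContDiffBump.convolution_tendsto_right_of_continuous hrout ha 0
  obtain ⟨M, hM⟩ := isBounded_iff_forall_norm_le.1 (isBounded_range_of_tendsto _ h0)
  have hMn : ∀ n, ‖an n 0‖ ≤ M := fun n => hM _ (Set.mem_range_self n)
  set R : ℝ := (‖x‖ + Δ * M) / (1 - Δ * L₁) with hR
  have hyR : ∀ n, y n ∈ Metric.closedBall (0 : E) R := by
    intro n
    have h1 := osl_norm_expand hΔ.le (hOSLn n) (y n) 0
    rw [hy n] at h1
    simp only [sub_zero, zero_sub, sub_neg_eq_add] at h1
    have h2 : ‖x + Δ • an n 0‖ ≤ ‖x‖ + Δ * M := by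
      refine le_trans (norm_add_le _ _) ?_
      have : ‖Δ • an n 0‖ = Δ * ‖an n 0‖ := by
        rw [norm_smul, Real.norm_of_nonneg hΔ.le]
      rw [this]
      exact add_le_add le_rfl (mul_le_mul_of_nonneg_left (hMn n) hΔ.le)
    rw [Metric.mem_closedBall, dist_zero_right, hR, le_div_iff₀ hcpos]
    calc ‖y n‖ * (1 - Δ * L₁) = (1 - Δ * L₁) * ‖y n‖ := mul_comm _ _
      _ ≤ ‖x + Δ • an n 0‖ := h1
      _ ≤ ‖x‖ + Δ * M := h2
  -- extract a convergent subsequence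
  obtain ⟨yl, -, σ, hσ, hyσ⟩ :=
    tendsto_subseq_of_bounded Metric.isBounded_closedBall hyR
  -- pass to the limit
  have hconvlim : Tendsto (fun k => an (σ k) (y (σ k))) atTop (𝓝 (a yl)) := by
    refine ContDiffBump.convolution_tendsto_right (φ := fun k => φ (σ k))
      (g := fun _ => a) (hrout.comp hσ.tendsto_atTop)
      (Eventually.of_forall fun _ => ha.aestronglyMeasurable) ?_ hyσ
    exact (ha.tendsto yl).comp tendsto_snd
  have hlim : Tendsto (fun k => y (σ k) - Δ • an (σ k) (y (σ k))) atTop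
      (𝓝 (yl - Δ • a yl)) := hyσ.sub (hconvlim.const_smul Δ)
  have hxeq : yl - Δ • a yl = x := by
    have hconstx : (fun k => y (σ k) - Δ • an (σ k) (y (σ k))) = fun _ => x :=
      funext fun k => hy (σ k)
    rw [hconstx] at hlim
    exact tendsto_nhds_unique hlim tendsto_const_nhds
  refine ⟨yl, ?_, ?_⟩
  · rw [← hxeq]; abel
  · intro z hz
    have h1 : z - Δ • a z = x := by nth_rewrite 1 [hz]; abel
    have h3 := osl_norm_expand hΔ.le hOSL z yl
    rw [h1, hxeq, sub_self, norm_zero] at h3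
    have hz0 : ‖z - yl‖ = 0 :=
      le_antisymm (by nlinarith [norm_nonneg (z - yl)]) (norm_nonneg _)
    exact sub_eq_zero.1 (norm_eq_zero.1 hz0)
end

section
/- Let c₁, c₂, c₃ > 0, v₀ > 0 and T > 0. Define a(x) = c₁·x·(c₂ − x) and b(x) = c₃·(max(x,0))^{3/2} for x ∈ ℝ. For each n ∈ ℕ let (ΔW^n_k)_{k=0,…,n−1} be independent real Gaussian random variables with mean 0 and variance T/n, and define the Euler scheme V̄^n_0 = v₀ and V̄^n_{k+1} = V̄^n_k + a(V̄^n_k)·(T/n) + b(V̄^n_k)·ΔW^n_k for k = 0, …, n−1. Then for every real p ∈ [1, ∞), lim_{n → ∞} E|V̄^n_n|^p = ∞. -/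
open MeasureTheory ProbabilityTheory Filter
open scoped NNReal ENNReal

lemma gauss_Icc_lb {v : ℝ≥0} (hv : v ≠ 0) {x y m : ℝ} (hxy : x ≤ y) (hx : x ^ 2 ≤ m)
    (hy : y ^ 2 ≤ m) :
    ENNReal.ofReal ((y - x) * ((Real.sqrt (2 * Real.pi * v))⁻¹ * Real.exp (-m / (2 * v))))
      ≤ gaussianReal 0 v (Set.Icc x y) := by
  have hvpos : (0 : ℝ) < (v : ℝ) := by positivity
  set c : ℝ := (Real.sqrt (2 * Real.pi * v))⁻¹ * Real.exp (-m / (2 * v)) with hc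
  have hcnonneg : 0 ≤ c := by positivity
  rw [gaussianReal_apply 0 hv]
  have h1 : ENNReal.ofReal ((y - x) * c)
      = ∫⁻ _ in Set.Icc x y, ENNReal.ofReal c := by
    rw [setLIntegral_const, Real.volume_Icc, ← ENNReal.ofReal_mul hcnonneg, mul_comm]
  rw [h1]
  refine setLIntegral_mono (measurable_gaussianPDF 0 v) (fun t ht => ?_)
  rw [gaussianPDF]
  refine ENNReal.ofReal_le_ofReal ?_
  rw [gaussianPDFReal]
  have ht2 : t ^ 2 ≤ m := by
    rcases le_or_gt 0 t with h0 | h0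
    · calc t ^ 2 ≤ y ^ 2 := by nlinarith [ht.2]
        _ ≤ m := hy
    · calc t ^ 2 ≤ x ^ 2 := by nlinarith [ht.1]
        _ ≤ m := hx
  have : Real.exp (-m / (2 * v)) ≤ Real.exp (-(t - 0) ^ 2 / (2 * v)) := by
    apply Real.exp_le_exp.mpr
    rw [div_le_div_iff₀ (by positivity) (by positivity)]
    nlinarith
  calc c ≤ (Real.sqrt (2 * Real.pi * v))⁻¹ * Real.exp (-(t - 0) ^ 2 / (2 * v)) := by
        rw [hc]; exact mul_le_mul_of_nonneg_left this (by positivity)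
    _ = _ := by norm_num

lemma euler_step_lb {c₁ c₂ c₃ T nR x w y : ℝ}
    (hc₁ : 0 < c₁) (hc₂ : 0 < c₂) (hc₃ : 0 < c₃) (hT : 0 < T) (hn : 1 ≤ nR)
    (hy : y = x + c₁ * x * (c₂ - x) * (T / nR) + c₃ * (max x 0) ^ ((3 : ℝ) / 2) * w)
    (hw : |w| ≤ c₁ * T / (8 * c₃ * nR))
    (hX1 : 2 * c₂ + 1 ≤ |x|) (hX2 : 8 * nR / (c₁ * T) ≤ |x|) :
    c₁ * T / (4 * nR) * x ^ 2 ≤ |y| := by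
  have hnR : (0 : ℝ) < nR := by linarith
  have hcT : (0 : ℝ) < c₁ * T := mul_pos hc₁ hT
  set A : ℝ := c₁ * x * (c₂ - x) with hA
  set B : ℝ := c₃ * (max x 0) ^ ((3 : ℝ) / 2) with hB
  have hax : c₁ / 2 * x ^ 2 ≤ |A| := by
    rw [hA, abs_mul, abs_mul, abs_of_pos hc₁]
    have h1 : |x| - c₂ ≤ |c₂ - x| := by
      rw [abs_sub_comm]
      have h2 := abs_sub_abs_le_abs_sub x c₂
      rw [abs_of_pos hc₂] at h2
      linarith
    have e1 : |x| * (|x| - c₂) ≤ |x| * |c₂ - x| := mul_le_mul_of_nonneg_left h1 (abs_nonneg x)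
    have e2 : x ^ 2 / 2 ≤ |x| * (|x| - c₂) := by
      nlinarith [mul_nonneg (show (0:ℝ) ≤ |x| - 2 * c₂ by linarith) (abs_nonneg x), sq_abs x]
    have e3 := mul_le_mul_of_nonneg_left (e2.trans e1) hc₁.le
    calc c₁ / 2 * x ^ 2 = c₁ * (x ^ 2 / 2) := by ring
      _ ≤ c₁ * (|x| * |c₂ - x|) := e3
      _ = c₁ * |x| * |c₂ - x| := by ring
  have hbx : |B| ≤ c₃ * x ^ 2 := by
    rw [hB]
    have hz : (0 : ℝ) ≤ max x 0 := le_max_right x 0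
    rw [abs_of_nonneg (mul_nonneg hc₃.le (Real.rpow_nonneg hz _))]
    have h2 : max x 0 ≤ |x| := max_le (le_abs_self x) (abs_nonneg x)
    have h3 : (max x 0) ^ ((3 : ℝ) / 2) ≤ |x| ^ ((3 : ℝ) / 2) :=
      Real.rpow_le_rpow hz h2 (by norm_num)
    have h4 : |x| ^ ((3 : ℝ) / 2) ≤ |x| ^ (2 : ℝ) :=
      Real.rpow_le_rpow_of_exponent_le (by linarith) (by norm_num)
    have h5 : |x| ^ (2 : ℝ) = x ^ 2 := by
      rw [show (2 : ℝ) = ((2 : ℕ) : ℝ) by norm_num, Real.rpow_natCast, sq_abs]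
    nlinarith
  have habs : |A| * (T / nR) - (|x| + |B| * |w|) ≤ |y| := by
    have h6 : A * (T / nR) = y + -(x + B * w) := by rw [hy]; ring
    have h7 : |A * (T / nR)| ≤ |y| + |x + B * w| := by
      calc |A * (T / nR)| = |y + -(x + B * w)| := by rw [h6]
        _ ≤ |y| + |-(x + B * w)| := abs_add_le _ _
        _ = |y| + |x + B * w| := by rw [abs_neg]
    have h8 : |x + B * w| ≤ |x| + |B| * |w| := by
      calc |x + B * w| ≤ |x| + |B * w| := abs_add_le _ _
        _ = |x| + |B| * |w| := by rw [abs_mul]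
    have h9 : |A * (T / nR)| = |A| * (T / nR) := by
      rw [abs_mul, abs_of_nonneg (by positivity : (0 : ℝ) ≤ T / nR)]
    linarith
  have hbw : |B| * |w| ≤ c₁ * T / (8 * nR) * x ^ 2 := by
    have h1 : |B| * |w| ≤ c₃ * x ^ 2 * (c₁ * T / (8 * c₃ * nR)) :=
      mul_le_mul hbx hw (abs_nonneg _) (by positivity)
    have h2 : c₃ * x ^ 2 * (c₁ * T / (8 * c₃ * nR)) = c₁ * T / (8 * nR) * x ^ 2 := by
      field_simp
    linarith
  have hxsmall : |x| ≤ c₁ * T / (8 * nR) * x ^ 2 := by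
    have h2D' : 8 * nR ≤ |x| * (c₁ * T) := by
      rw [div_le_iff₀ hcT] at hX2
      linarith
    rw [div_mul_eq_mul_div, le_div_iff₀ (by positivity : (0 : ℝ) < 8 * nR)]
    nlinarith [mul_le_mul_of_nonneg_left h2D' (abs_nonneg x), sq_abs x]
  have haT : c₁ / 2 * x ^ 2 * (T / nR) ≤ |A| * (T / nR) :=
    mul_le_mul_of_nonneg_right hax (by positivity)
  have hring : c₁ / 2 * x ^ 2 * (T / nR)
      = c₁ * T / (4 * nR) * x ^ 2 + c₁ * T / (8 * nR) * x ^ 2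
        + c₁ * T / (8 * nR) * x ^ 2 := by
    field_simp
    ring
  linarith

lemma exponent_lower {u at3 lq ln nn : ℝ} (hn : 1 ≤ nn) (hln0 : 0 ≤ ln) (hln1 : ln ≤ nn)
    (hn3 : nn ≤ nn ^ 3) (hn23 : nn ^ 2 ≤ nn ^ 3) :
    u - (at3 + 1 + |lq|) * nn ^ 3 ≤ u - at3 * nn ^ 3 + (nn - 1) * (lq - ln) := by
  have hp1 : -(|lq| + nn) ≤ lq - ln := by
    have := neg_abs_le lq
    linarith
  have hp3 : (nn - 1) * (-(|lq| + nn)) ≤ (nn - 1) * (lq - ln) :=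
    mul_le_mul_of_nonneg_left hp1 (by linarith)
  have habs3 : |lq| * nn ≤ |lq| * nn ^ 3 := mul_le_mul_of_nonneg_left hn3 (abs_nonneg _)
  nlinarith [abs_nonneg lq]

set_option maxHeartbeats 2000000 in
/-- Moment explosion of the explicit Euler scheme for the volatility process of the 3/2-model:
with drift `a x = c₁ x (c₂ - x)` and diffusion `b x = c₃ (max x 0)^{3/2}`, all absolute moments
of the Euler approximation at the final time diverge as the step size `T/n` tends to zero. -/
theorem euler_moment_explosion_three_halves_model
    {Ω : Type*} [MeasurableSpace Ω] (P : Measure Ω) [IsProbabilityMeasure P]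
    (c₁ c₂ c₃ v₀ T : ℝ) (hc₁ : 0 < c₁) (hc₂ : 0 < c₂) (hc₃ : 0 < c₃)
    (hv₀ : 0 < v₀) (hT : 0 < T)
    (a b : ℝ → ℝ)
    (ha : ∀ x : ℝ, a x = c₁ * x * (c₂ - x))
    (hb : ∀ x : ℝ, b x = c₃ * (max x 0) ^ ((3 : ℝ) / 2))
    (W : (n : ℕ) → Fin n → Ω → ℝ)
    (hWmeas : ∀ n (k : Fin n), Measurable (W n k))
    (hWlaw : ∀ n (k : Fin n),
      Measure.map (W n k) P = gaussianReal 0 (Real.toNNReal (T / n)))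
    (hWindep : ∀ n : ℕ,
      iIndepFun (W n) P)
    (V : (n : ℕ) → ℕ → Ω → ℝ)
    (hV0 : ∀ n ω, V n 0 ω = v₀)
    (hVrec : ∀ n (k : Fin n) (ω : Ω),
      V n ((k : ℕ) + 1) ω
        = V n (k : ℕ) ω + a (V n (k : ℕ) ω) * (T / n) + b (V n (k : ℕ) ω) * W n k ω) :
    ∀ p : ℝ, 1 ≤ p →
      Tendsto (fun n : ℕ => ∫⁻ ω, ENNReal.ofReal (|V n n ω| ^ p) ∂P) atTop (nhds ⊤) := by
  intro p hp
  -- basic constants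
  set β : ℝ := c₃ * v₀ ^ ((3 : ℝ) / 2) with hβdef
  have hβ : 0 < β := mul_pos hc₃ (Real.rpow_pos_of_pos hv₀ _)
  set C₀ : ℝ := v₀ + |a v₀| * T with hC₀def
  have hC₀ : 0 < C₀ := by positivity
  set D : ℕ → ℝ := fun n => 4 * n / (c₁ * T) with hDdef
  set K : ℕ → ℝ := fun n => (D n * Real.exp 1 + C₀) / β with hKdef
  set ε : ℕ → ℝ := fun n => c₁ * T / (8 * c₃ * n) with hεdef
  set S : (n : ℕ) → Fin n → Set ℝ :=
    fun n k => if (k : ℕ) = 0 then Set.Icc (K n) (K n + 1) else Set.Icc (-(ε n)) (ε n) with hSdef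
  have hSmeas : ∀ n (k : Fin n), MeasurableSet (S n k) := by
    intro n k
    simp only [hSdef]
    split <;> exact measurableSet_Icc
  set A : ℕ → Set Ω := fun n => ⋂ k : Fin n, W n k ⁻¹' (S n k) with hAdef
  have hAmeas : ∀ n, MeasurableSet (A n) :=
    fun n => MeasurableSet.iInter fun k => (hWmeas n k) (hSmeas n k)
  set g₀ : ℕ → ℝ := fun n =>
    (Real.sqrt (2 * Real.pi * (T / n)))⁻¹ * Real.exp (-(K n + 1) ^ 2 / (2 * (T / n))) with hg₀def
  set g₁ : ℕ → ℝ := fun n =>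
    2 * ε n * ((Real.sqrt (2 * Real.pi * (T / n)))⁻¹
      * Real.exp (-(ε n) ^ 2 / (2 * (T / n)))) with hg₁def
  set R : ℕ → ℝ := fun n =>
    Real.exp ((2 : ℝ) ^ (n - 1)) * (g₀ n * g₁ n ^ (n - 1)) with hRdef
  clear_value β C₀ D K ε S A g₀ g₁ R
  -- the main per-n lower bound
  have main : ∀ n : ℕ, 1 ≤ n → 2 * c₂ + 1 ≤ D n →
      ENNReal.ofReal (R n) ≤ ∫⁻ ω, ENNReal.ofReal (|V n n ω| ^ p) ∂P := by
    intro n hn1 hDn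
    obtain ⟨m, rfl⟩ : ∃ m, n = m + 1 := ⟨n - 1, (Nat.succ_pred_eq_of_pos hn1).symm⟩
    set n : ℕ := m + 1 with hndef
    have hnR : (0 : ℝ) < n := by positivity
    have hn1R : (1 : ℝ) ≤ n := by exact_mod_cast hn1
    have hDpos : 0 < D n := by simp only [hDdef]; positivity
    have hKpos : 0 < K n := by simp only [hKdef]; positivity
    have hεpos : 0 < ε n := by simp only [hεdef]; positivity
    have hvnR : ((Real.toNNReal (T / n)) : ℝ) = T / n :=
      Real.coe_toNNReal _ (by positivity)
    have hvne : Real.toNNReal (T / n) ≠ 0 := by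
      intro h
      rw [Real.toNNReal_eq_zero] at h
      exact absurd h (not_le.mpr (by positivity))
    -- memberships
    have hmem : ∀ ω ∈ A n, ∀ i : Fin n, W n i ω ∈ S n i := by
      intro ω hω i
      simp only [hAdef, Set.mem_iInter] at hω
      exact hω i
    -- the pathwise lower bound by induction
    have key : ∀ k : ℕ, ∀ ω ∈ A n, k + 1 ≤ n →
        D n * Real.exp ((2 : ℝ) ^ k) ≤ |V n (k + 1) ω| := by
      intro k ω hω
      have hωS := hmem ω hω
      induction k with
      | zero =>
        intro hk1
        have h0n : 0 < n := hn1
        have hrec : V n 1 ω = V n 0 ω + a (V n 0 ω) * (T / n)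
            + b (V n 0 ω) * W n ⟨0, h0n⟩ ω := hVrec n ⟨0, h0n⟩ ω
        rw [hV0] at hrec
        have hbv : b v₀ = β := by
          rw [hb, max_eq_left hv₀.le, hβdef]
        have hw : W n ⟨0, h0n⟩ ω ∈ Set.Icc (K n) (K n + 1) := by
          have := hωS ⟨0, h0n⟩
          simpa only [hSdef, if_pos rfl] using this
        have hβK : β * K n = D n * Real.exp 1 + C₀ := by
          simp only [hKdef]
          field_simp
        have h2 : β * K n ≤ β * W n ⟨0, h0n⟩ ω :=
          mul_le_mul_of_nonneg_left hw.1 hβ.le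
        have hTn : T / n ≤ T := div_le_self hT.le hn1R
        have h1 : -(|a v₀| * T) ≤ a v₀ * (T / n) := by
          have h3 : -|a v₀| * (T / n) ≤ a v₀ * (T / n) :=
            mul_le_mul_of_nonneg_right (neg_abs_le _) (by positivity)
          have h4 : |a v₀| * (T / n) ≤ |a v₀| * T :=
            mul_le_mul_of_nonneg_left hTn (abs_nonneg _)
          linarith
        have hgoal : D n * Real.exp ((2 : ℝ) ^ 0) ≤ V n 1 ω := by
          rw [hrec, hbv, pow_zero]
          rw [hC₀def] at hβK
          linarith
        exact hgoal.trans (le_abs_self _)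
      | succ k ih =>
        intro hk2
        have hx := ih (by omega)
        set x : ℝ := V n (k + 1) ω with hxdef
        have hkn : k + 1 < n := by omega
        have hrec : V n (k + 1 + 1) ω = x + a x * (T / n)
            + b x * W n ⟨k + 1, hkn⟩ ω := hVrec n ⟨k + 1, hkn⟩ ω
        set w : ℝ := W n ⟨k + 1, hkn⟩ ω with hwdef
        have hwmem : w ∈ Set.Icc (-(ε n)) (ε n) := by
          have := hωS ⟨k + 1, hkn⟩
          simpa only [hSdef, if_neg (Nat.succ_ne_zero k)] using this
        have hweps : |w| ≤ c₁ * T / (8 * c₃ * n) := by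
          have := abs_le.mpr ⟨hwmem.1, hwmem.2⟩
          simpa only [hεdef] using this
        have hexp1 : (1 : ℝ) ≤ Real.exp ((2 : ℝ) ^ k) := Real.one_le_exp (by positivity)
        have hE1 : (2 : ℝ) ≤ Real.exp ((2 : ℝ) ^ k) := by
          have h1 : (1 : ℝ) ≤ (2 : ℝ) ^ k := one_le_pow₀ one_le_two
          have h2 : Real.exp 1 ≤ Real.exp ((2 : ℝ) ^ k) := Real.exp_le_exp.mpr h1
          have h3 := Real.add_one_le_exp (1 : ℝ)
          linarith
        have hDle : D n * 1 ≤ D n * Real.exp ((2 : ℝ) ^ k) :=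
          mul_le_mul_of_nonneg_left hexp1 hDpos.le
        have hD2 : D n * 2 ≤ D n * Real.exp ((2 : ℝ) ^ k) :=
          mul_le_mul_of_nonneg_left hE1 hDpos.le
        have hX1 : 2 * c₂ + 1 ≤ |x| := by linarith
        have hX2 : 8 * (n : ℝ) / (c₁ * T) ≤ |x| := by
          have h5 : 8 * (n : ℝ) / (c₁ * T) = 2 * D n := by
            simp only [hDdef]; ring
          linarith
        have hy : V n (k + 1 + 1) ω = x + c₁ * x * (c₂ - x) * (T / n)
            + c₃ * (max x 0) ^ ((3 : ℝ) / 2) * w := by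
          rw [hrec, ha, hb]
        have hstep := euler_step_lb hc₁ hc₂ hc₃ hT hn1R hy hweps hX1 hX2
        have hx2 : (D n * Real.exp ((2 : ℝ) ^ k)) ^ 2 ≤ x ^ 2 := by
          have h6 : (0 : ℝ) ≤ D n * Real.exp ((2 : ℝ) ^ k) := by positivity
          calc (D n * Real.exp ((2 : ℝ) ^ k)) ^ 2 ≤ |x| ^ 2 := by
                exact pow_le_pow_left₀ h6 hx 2
            _ = x ^ 2 := sq_abs x
        have hfin : c₁ * T / (4 * n) * (D n * Real.exp ((2 : ℝ) ^ k)) ^ 2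
            = D n * Real.exp ((2 : ℝ) ^ (k + 1)) := by
          have hexp : Real.exp ((2 : ℝ) ^ k) ^ 2 = Real.exp ((2 : ℝ) ^ (k + 1)) := by
            rw [← Real.exp_nat_mul]
            congr 1
            push_cast
            ring
          rw [mul_pow, ← hexp]
          simp only [hDdef]
          field_simp
        calc D n * Real.exp ((2 : ℝ) ^ (k + 1))
            = c₁ * T / (4 * n) * (D n * Real.exp ((2 : ℝ) ^ k)) ^ 2 := hfin.symm
          _ ≤ c₁ * T / (4 * n) * x ^ 2 :=
            mul_le_mul_of_nonneg_left hx2 (by positivity)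
          _ ≤ |V n (k + 1 + 1) ω| := hstep
    -- probability lower bound
    have Pbound : ENNReal.ofReal (g₀ n * g₁ n ^ m) ≤ P (A n) := by
      have hfac : ∀ i : Fin n, P (W n i ⁻¹' S n i)
          = gaussianReal 0 (Real.toNNReal (T / n)) (S n i) := by
        intro i
        rw [← hWlaw n i, Measure.map_apply (hWmeas n i) (hSmeas n i)]
      have hP : P (A n) = ∏ i : Fin n, gaussianReal 0 (Real.toNNReal (T / n)) (S n i) := by
        have h1 : P (A n) = ∏ i : Fin n, P (W n i ⁻¹' S n i) := by
          simp only [hAdef]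
          exact (hWindep n).meas_iInter fun i => ⟨S n i, hSmeas n i, rfl⟩
        rw [h1]
        exact Finset.prod_congr rfl fun i _ => hfac i
      have h0 : ENNReal.ofReal (g₀ n)
          ≤ gaussianReal 0 (Real.toNNReal (T / n)) (S n (0 : Fin n)) := by
        have hS0 : S n (0 : Fin n) = Set.Icc (K n) (K n + 1) := by
          simp [hSdef]
        rw [hS0]
        have := gauss_Icc_lb (v := Real.toNNReal (T / n)) hvne
          (x := K n) (y := K n + 1) (m := (K n + 1) ^ 2)
          (by linarith) (by nlinarith [hKpos]) le_rfl
        rw [hvnR] at this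
        refine le_trans (le_of_eq ?_) this
        congr 1
        simp only [hg₀def]
        ring_nf
      have h1g : ENNReal.ofReal (g₁ n)
          ≤ gaussianReal 0 (Real.toNNReal (T / n)) (Set.Icc (-(ε n)) (ε n)) := by
        have := gauss_Icc_lb (v := Real.toNNReal (T / n)) hvne
          (x := -(ε n)) (y := ε n) (m := (ε n) ^ 2)
          (by linarith) (by rw [neg_pow]; norm_num) le_rfl
        rw [hvnR] at this
        refine le_trans (le_of_eq ?_) this
        simp only [hg₁def]
        congr 1
        ring_nf
      have hprod : ENNReal.ofReal (g₀ n) * ENNReal.ofReal (g₁ n) ^ m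
          ≤ ∏ i : Fin n, gaussianReal 0 (Real.toNNReal (T / n)) (S n i) := by
        rw [show (∏ i : Fin n, gaussianReal 0 (Real.toNNReal (T / n)) (S n i))
            = gaussianReal 0 (Real.toNNReal (T / n)) (S n (0 : Fin (m + 1)))
              * ∏ i : Fin m, gaussianReal 0 (Real.toNNReal (T / n)) (S n i.succ)
          from Fin.prod_univ_succ _]
        refine mul_le_mul' h0 ?_
        have hSsucc : ∀ i : Fin m, S n i.succ = Set.Icc (-(ε n)) (ε n) := by
          intro i
          simp only [hSdef]
          rw [if_neg]
          simp [Fin.val_succ]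
        calc ENNReal.ofReal (g₁ n) ^ m
            = ∏ _i : Fin m, ENNReal.ofReal (g₁ n) := by
              rw [Finset.prod_const, Finset.card_univ, Fintype.card_fin]
          _ ≤ ∏ i : Fin m, gaussianReal 0 (Real.toNNReal (T / n)) (S n i.succ) := by
              refine Finset.prod_le_prod' fun i _ => ?_
              rw [hSsucc i]
              exact h1g
      rw [hP]
      refine le_trans (le_of_eq ?_) hprod
      rw [ENNReal.ofReal_mul (by simp only [hg₀def]; positivity),
        ENNReal.ofReal_pow (by simp only [hg₁def, hεdef]; positivity)]

    -- integral lower bound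
    set M : ℝ := Real.exp ((2 : ℝ) ^ m) with hMdef
    have hM1 : 1 ≤ M := Real.one_le_exp (by positivity)
    have hMV : ∀ ω ∈ A n, M ≤ |V n n ω| := by
      intro ω hω
      have h := key m ω hω le_rfl
      have hD1 : 1 ≤ D n := by linarith
      calc M = 1 * M := (one_mul M).symm
        _ ≤ D n * M := by exact mul_le_mul_of_nonneg_right hD1 (by positivity)
        _ ≤ |V n (m + 1) ω| := h
    have hint : ENNReal.ofReal M * P (A n) ≤ ∫⁻ ω, ENNReal.ofReal (|V n n ω| ^ p) ∂P := by
      have h1 : ENNReal.ofReal M * P (A n)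
          = ∫⁻ ω, (A n).indicator (fun _ => ENNReal.ofReal M) ω ∂P := by
        rw [lintegral_indicator (hAmeas n), setLIntegral_const]
      rw [h1]
      refine lintegral_mono fun ω => ?_
      by_cases hω : ω ∈ A n
      · rw [Set.indicator_of_mem hω]
        refine ENNReal.ofReal_le_ofReal ?_
        calc M = M ^ (1 : ℝ) := (Real.rpow_one M).symm
          _ ≤ M ^ p := Real.rpow_le_rpow_of_exponent_le hM1 hp
          _ ≤ |V n n ω| ^ p :=
            Real.rpow_le_rpow (by linarith) (hMV ω hω) (by linarith)
      · rw [Set.indicator_of_notMem hω]; exact zero_le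
    calc ENNReal.ofReal (R n)
        = ENNReal.ofReal M * ENNReal.ofReal (g₀ n * g₁ n ^ m) := by
          rw [← ENNReal.ofReal_mul (by positivity)]
          simp only [hRdef, hMdef, hndef, Nat.add_sub_cancel]
      _ ≤ ENNReal.ofReal M * P (A n) := mul_le_mul_right Pbound _
      _ ≤ _ := hint

  -- eventual hypotheses
  have hDev : ∀ᶠ n : ℕ in atTop, 1 ≤ n ∧ 2 * c₂ + 1 ≤ D n := by
    have h1 : ∀ᶠ n : ℕ in atTop, (c₁ * T * (2 * c₂ + 1) / 4 : ℝ) ≤ n :=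
      (tendsto_natCast_atTop_atTop (R := ℝ)).eventually_ge_atTop _
    filter_upwards [h1, eventually_ge_atTop 1] with n h hn1
    refine ⟨hn1, ?_⟩
    simp only [hDdef]
    rw [le_div_iff₀ (by positivity)]
    nlinarith
  -- R tends to infinity
  have hRtop : Tendsto R atTop atTop := by
    set α' : ℝ := (4 * Real.exp 1 / (c₁ * T) + C₀ + β) / β with hα'def
    have hα'pos : 0 < α' := by simp only [hα'def]; positivity
    set c₄ : ℝ := (Real.sqrt (2 * Real.pi * T))⁻¹ with hc₄def
    have hsqTpos : (0:ℝ) < Real.sqrt (2 * Real.pi * T) :=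
      Real.sqrt_pos.mpr (by positivity)
    have hc₄pos : 0 < c₄ := by simp only [hc₄def]; positivity
    set q : ℝ := c₁ * T / (4 * c₃) * (c₄
        * Real.exp (-((c₁ * T / (8 * c₃)) ^ 2 / (2 * T)))) with hqdef
    have hqpos : 0 < q := by simp only [hqdef]; positivity
    set c₇ : ℝ := α' ^ 2 / (2 * T) + 1 + |Real.log q| with hc₇def
    have hc₇pos : 0 < c₇ := by simp only [hc₇def]; positivity
    set e : ℕ → ℝ := fun n => (2:ℝ) ^ (n-1) - α' ^ 2 * (n:ℝ) ^ 3 / (2*T)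
        + ((n-1 : ℕ) : ℝ) * Real.log (q / n) with hedef
    clear_value α' c₄ q c₇ e
    -- each R n dominates c₄ * exp (e n)
    have hR'leR : ∀ n : ℕ, 1 ≤ n → c₄ * Real.exp (e n) ≤ R n := by
      intro n hn1
      have hn1R : (1:ℝ) ≤ (n:ℝ) := by exact_mod_cast hn1
      have hnpos : (0:ℝ) < n := by linarith
      have hKnn : 0 ≤ K n := by simp only [hKdef, hDdef]; positivity
      have hεpos : 0 < ε n := by simp only [hεdef]; positivity
      have hsqle : Real.sqrt (2 * Real.pi * (T / n)) ≤ Real.sqrt (2 * Real.pi * T) := by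
        apply Real.sqrt_le_sqrt
        have h : T / (n:ℝ) ≤ T := div_le_self hT.le hn1R
        exact mul_le_mul_of_nonneg_left h (by positivity)
      have hsqpos : (0:ℝ) < Real.sqrt (2 * Real.pi * (T / n)) :=
        Real.sqrt_pos.mpr (by positivity)
      have hsq : c₄ ≤ (Real.sqrt (2 * Real.pi * (T / n)))⁻¹ := by
        simp only [hc₄def]
        exact inv_anti₀ hsqpos hsqle
      have hsqinv0 : (0:ℝ) ≤ (Real.sqrt (2 * Real.pi * (T / n)))⁻¹ := by positivity
      -- bound for g₀
      have hKb : K n + 1 ≤ α' * n := by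
        have hkey : D n * Real.exp 1 + C₀ + β
            ≤ (4 * Real.exp 1 / (c₁ * T) + C₀ + β) * n := by
          simp only [hDdef]
          have h1 : (C₀ + β) * 1 ≤ (C₀ + β) * n :=
            mul_le_mul_of_nonneg_left hn1R (by positivity)
          have h2 : 4 * (n:ℝ) / (c₁ * T) * Real.exp 1
              = 4 * Real.exp 1 / (c₁ * T) * n := by ring
          nlinarith [h1, h2]
        have heq : K n + 1 = (D n * Real.exp 1 + C₀ + β) / β := by
          simp only [hKdef]
          field_simp
        have hα'n : α' * n = (4 * Real.exp 1 / (c₁ * T) + C₀ + β) * n / β := by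
          simp only [hα'def]; ring
        rw [heq, hα'n]
        exact (div_le_div_iff_of_pos_right hβ).mpr hkey
      have hK2 : (K n + 1) ^ 2 ≤ (α' * n) ^ 2 :=
        pow_le_pow_left₀ (by linarith) hKb 2
      have hdivK : (K n + 1) ^ 2 / (2 * (T / n)) ≤ α' ^ 2 * (n:ℝ) ^ 3 / (2*T) := by
        have heq1 : (K n + 1) ^ 2 / (2 * (T / n)) = (K n + 1) ^ 2 * n / (2*T) := by
          field_simp
        have heq2 : α' ^ 2 * (n:ℝ) ^ 3 / (2*T) = (α' * n) ^ 2 * n / (2*T) := by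
          ring
        rw [heq1, heq2]
        exact (div_le_div_iff_of_pos_right (by positivity)).mpr
          (mul_le_mul_of_nonneg_right hK2 hnpos.le)
      have hg₀b : c₄ * Real.exp (-(α' ^ 2 * (n:ℝ) ^ 3 / (2*T))) ≤ g₀ n := by
        simp only [hg₀def]
        refine mul_le_mul hsq ?_ (Real.exp_pos _).le hsqinv0
        refine Real.exp_le_exp.mpr ?_
        rw [neg_div]
        linarith
      -- bound for g₁
      have hεe : (ε n) ^ 2 / (2 * (T / n)) ≤ (c₁ * T / (8 * c₃)) ^ 2 / (2*T) := by
        have heq : (ε n) ^ 2 / (2 * (T / n))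
            = (c₁ * T / (8 * c₃)) ^ 2 / ((n:ℝ) * (2 * T)) := by
          simp only [hεdef]
          field_simp
        rw [heq]
        refine div_le_div_of_nonneg_left (by positivity) (by positivity) ?_
        nlinarith
      have hg₁b : q / n ≤ g₁ n := by
        have h2ε : c₁ * T / (4 * c₃) / (n:ℝ) = 2 * ε n := by
          simp only [hεdef]
          field_simp
          ring
        have hmul2 : c₄ * Real.exp (-((c₁ * T / (8 * c₃)) ^ 2 / (2 * T)))
            ≤ (Real.sqrt (2 * Real.pi * (T / n)))⁻¹
              * Real.exp (-(ε n) ^ 2 / (2 * (T / n))) := by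
          refine mul_le_mul hsq ?_ (Real.exp_pos _).le hsqinv0
          refine Real.exp_le_exp.mpr ?_
          rw [neg_div]
          linarith
        calc q / n = (c₁ * T / (4 * c₃) / (n:ℝ))
              * (c₄ * Real.exp (-((c₁ * T / (8 * c₃)) ^ 2 / (2 * T)))) := by
              simp only [hqdef]; ring
          _ ≤ (2 * ε n) * ((Real.sqrt (2 * Real.pi * (T / n)))⁻¹
              * Real.exp (-(ε n) ^ 2 / (2 * (T / n)))) := by
              rw [h2ε]
              refine mul_le_mul_of_nonneg_left hmul2 (by positivity)
          _ = g₁ n := by simp only [hg₁def]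
      have hpow : (q / (n:ℝ)) ^ (n-1) ≤ g₁ n ^ (n-1) :=
        pow_le_pow_left₀ (by positivity) hg₁b _
      have hqn : (q / (n:ℝ)) ^ (n-1)
          = Real.exp (((n-1 : ℕ) : ℝ) * Real.log (q / n)) := by
        rw [Real.exp_nat_mul, Real.exp_log (by positivity)]
      have hfinal : c₄ * Real.exp (e n)
          = Real.exp ((2:ℝ) ^ (n-1))
            * ((c₄ * Real.exp (-(α' ^ 2 * (n:ℝ) ^ 3 / (2*T))))
              * Real.exp (((n-1 : ℕ) : ℝ) * Real.log (q / n))) := by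
        simp only [hedef]
        rw [show (2:ℝ) ^ (n-1) - α' ^ 2 * (n:ℝ) ^ 3 / (2*T)
            + ((n-1 : ℕ) : ℝ) * Real.log (q / n)
            = ((2:ℝ) ^ (n-1)) + (-(α' ^ 2 * (n:ℝ) ^ 3 / (2*T)))
              + (((n-1 : ℕ) : ℝ) * Real.log (q / n)) by ring,
          Real.exp_add, Real.exp_add]
        ring
      rw [hfinal]
      simp only [hRdef]
      refine mul_le_mul_of_nonneg_left ?_ (Real.exp_pos _).le
      have hg₀0 : (0:ℝ) ≤ c₄ * Real.exp (-(α' ^ 2 * (n:ℝ) ^ 3 / (2*T))) := by positivity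
      calc (c₄ * Real.exp (-(α' ^ 2 * (n:ℝ) ^ 3 / (2*T))))
            * Real.exp (((n-1 : ℕ) : ℝ) * Real.log (q / n))
          = (c₄ * Real.exp (-(α' ^ 2 * (n:ℝ) ^ 3 / (2*T)))) * (q / (n:ℝ)) ^ (n-1) := by
            rw [hqn]
        _ ≤ g₀ n * g₁ n ^ (n-1) :=
            mul_le_mul hg₀b hpow (by positivity) (le_trans hg₀0 hg₀b)
    -- e tends to infinity
    have hev : ∀ n : ℕ, 1 ≤ n → (2:ℝ) ^ (n-1) - c₇ * (n:ℝ) ^ 3 ≤ e n := by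
      intro n hn1
      have hn1R : (1:ℝ) ≤ (n:ℝ) := by exact_mod_cast hn1
      have hnpos : (0:ℝ) < n := by linarith
      have hcast : ((n-1 : ℕ) : ℝ) = (n:ℝ) - 1 := by
        rw [Nat.cast_sub hn1, Nat.cast_one]
      have hlog : Real.log (q / n) = Real.log q - Real.log n :=
        Real.log_div hqpos.ne' (by positivity)
      have hlogn1 : Real.log n ≤ (n:ℝ) := by
        have := Real.log_le_sub_one_of_pos hnpos
        linarith
      have hlogn0 : 0 ≤ Real.log n := Real.log_nonneg hn1R
      have hn2' : (n:ℝ) * 1 ≤ (n:ℝ) * (n:ℝ) :=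
        mul_le_mul_of_nonneg_left hn1R (by positivity)
      have hn3' : (n:ℝ) * (n:ℝ) * 1 ≤ (n:ℝ) * (n:ℝ) * (n:ℝ) :=
        mul_le_mul_of_nonneg_left hn1R (by positivity)
      have hn3 : (n:ℝ) ≤ (n:ℝ) ^ 3 := by nlinarith [hn2', hn3']
      have hn23 : (n:ℝ) ^ 2 ≤ (n:ℝ) ^ 3 := by nlinarith [hn3']
      simp only [hedef, hc₇def, hcast, hlog]
      have hrw : α' ^ 2 * (n:ℝ) ^ 3 / (2*T) = α' ^ 2 / (2*T) * (n:ℝ) ^ 3 := by ring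
      rw [hrw]
      exact exponent_lower hn1R hlogn0 hlogn1 hn3 hn23
    have hgt : Tendsto (fun n : ℕ => (2:ℝ) ^ (n-1) - c₇ * (n:ℝ) ^ 3) atTop atTop := by
      have hsum : Summable (fun n : ℕ => (n:ℝ) ^ 3 * (1/2 : ℝ) ^ n) :=
        summable_pow_mul_geometric_of_norm_lt_one 3
          (by rw [Real.norm_eq_abs, abs_of_nonneg (by norm_num : (0:ℝ) ≤ 1/2)]; norm_num)
      have hzero : Tendsto (fun n : ℕ => (n:ℝ) ^ 3 * (1/2 : ℝ) ^ n) atTop (nhds 0) :=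
        hsum.tendsto_atTop_zero
      have hδ : (0:ℝ) < 1 / (4 * (c₇ + 1)) := by positivity
      have hevs : ∀ᶠ n : ℕ in atTop, c₇ * (n:ℝ) ^ 3 ≤ 1/4 * 2 ^ n := by
        filter_upwards [hzero.eventually_lt_const hδ] with n hn
        have h2 : ((1:ℝ)/2) ^ n * 2 ^ n = 1 := by
          rw [← mul_pow]; norm_num
        have h3 : ((n:ℝ)) ^ 3 = ((n:ℝ) ^ 3 * (1/2 : ℝ) ^ n) * 2 ^ n := by
          rw [mul_assoc, h2, mul_one]
        have hpow2 : (0:ℝ) < 2 ^ n := by positivity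
        have h4 : c₇ * ((n:ℝ) ^ 3 * (1/2 : ℝ) ^ n) ≤ c₇ * (1 / (4 * (c₇ + 1))) :=
          mul_le_mul_of_nonneg_left hn.le hc₇pos.le
        have h5 : c₇ * (1 / (4 * (c₇ + 1))) ≤ 1/4 := by
          rw [mul_one_div, div_le_div_iff₀ (by positivity) (by norm_num)]
          nlinarith
        calc c₇ * (n:ℝ) ^ 3 = (c₇ * ((n:ℝ) ^ 3 * (1/2 : ℝ) ^ n)) * 2 ^ n := by
              conv_lhs => rw [h3]
              ring
          _ ≤ 1/4 * 2 ^ n :=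
              mul_le_mul_of_nonneg_right (h4.trans h5) hpow2.le
      have h2n : Tendsto (fun n : ℕ => (1/4 : ℝ) * 2 ^ n) atTop atTop :=
        (tendsto_pow_atTop_atTop_of_one_lt one_lt_two).const_mul_atTop (by norm_num)
      refine tendsto_atTop_mono' atTop ?_ h2n
      filter_upwards [hevs, eventually_ge_atTop 1] with n hn hn1
      have hhalf : (2:ℝ) ^ (n-1) * 2 = 2 ^ n := by
        rw [← pow_succ]
        congr 1
        omega
      linarith
    have htende : Tendsto e atTop atTop := by
      refine tendsto_atTop_mono' atTop ?_ hgt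
      filter_upwards [eventually_ge_atTop 1] with n hn using hev n hn
    have hR'top : Tendsto (fun n : ℕ => c₄ * Real.exp (e n)) atTop atTop :=
      (Real.tendsto_exp_atTop.comp htende).const_mul_atTop hc₄pos
    refine tendsto_atTop_mono' atTop ?_ hR'top
    filter_upwards [eventually_ge_atTop 1] with n hn using hR'leR n hn

  refine tendsto_nhds_top_mono (ENNReal.tendsto_ofReal_atTop.comp hRtop) ?_
  filter_upwards [hDev] with n hn
  exact main n hn.1 hn.2
end

section
/- Let α_{−1}, α₀, α₁, α₂ > 0 and r > 1, and define a(x) = α_{−1}·x^{−1} − α₀ + α₁·x − α₂·x^r for x > 0. Then for all x, y > 0, (x − y)·(a(x) − a(y)) ≤ α₁·(x − y)². -/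
/-- The drift of the Ait-Sahalia model is one-sided Lipschitz with constant `α₁` on `(0, ∞)`. -/
theorem ait_sahalia_drift_one_sided_lipschitz
    (αm1 α₀ α₁ α₂ r : ℝ) (hαm1 : 0 < αm1) (hα₀ : 0 < α₀) (hα₁ : 0 < α₁) (hα₂ : 0 < α₂)
    (hr : 1 < r) :
    ∀ x y : ℝ, 0 < x → 0 < y →
      (x - y) * ((αm1 * x⁻¹ - α₀ + α₁ * x - α₂ * x ^ r)
          - (αm1 * y⁻¹ - α₀ + α₁ * y - α₂ * y ^ r))
        ≤ α₁ * (x - y) ^ 2 := by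
  intro x y hx hy
  have h1 : (x - y) * (x⁻¹ - y⁻¹) ≤ 0 := by
    have : x⁻¹ - y⁻¹ = (y - x) / (x * y) := by field_simp
    rw [this]
    rcases le_total x y with h | h
    · apply mul_nonpos_of_nonpos_of_nonneg
      · linarith
      · apply div_nonneg
        · linarith
        · positivity
    · apply mul_nonpos_of_nonneg_of_nonpos
      · linarith
      · apply div_nonpos_of_nonpos_of_nonneg
        · linarith
        · positivity
  have h2 : 0 ≤ (x - y) * (x ^ r - y ^ r) := by
    rcases le_total x y with h | h
    · have := Real.rpow_le_rpow hx.le h (by linarith : (0:ℝ) ≤ r)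
      nlinarith
    · have := Real.rpow_le_rpow hy.le h (by linarith : (0:ℝ) ≤ r)
      apply mul_nonneg <;> linarith
  nlinarith [mul_nonneg hαm1.le (neg_nonneg.mpr h1), mul_nonneg hα₂.le h2]
end

section
/- Let α_{−1}, α₀, α₁, α₂ > 0 and r > 1, and define a(x) = α_{−1}·x^{−1} − α₀ + α₁·x − α₂·x^r for x > 0. Let Δ > 0 satisfy Δ·α₁ ≤ 1. Then for every z ∈ ℝ there exists a unique y > 0 such that y = z + a(y)·Δ. In particular, the backward (drift-implicit) Euler scheme for the Ait-Sahalia model is well defined and takes only strictly positive values. -/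
open Filter Set Topology

/-- Well-definedness and positivity of the backward (drift-implicit) Euler scheme for the
Ait-Sahalia model: for `Δ·α₁ ≤ 1` and every `z ∈ ℝ` the implicit equation `y = z + a(y)·Δ`
with `a y = α₋₁ y⁻¹ - α₀ + α₁ y - α₂ y^r` has a unique strictly positive solution. -/
theorem ait_sahalia_backward_euler_well_defined
    (αm1 α₀ α₁ α₂ r Δ : ℝ) (hαm1 : 0 < αm1) (hα₀ : 0 < α₀) (hα₁ : 0 < α₁) (hα₂ : 0 < α₂)
    (hr : 1 < r) (hΔ : 0 < Δ) (hΔα : Δ * α₁ ≤ 1) :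
    ∀ z : ℝ, ∃! y : ℝ,
      0 < y ∧ y = z + (αm1 * y⁻¹ - α₀ + α₁ * y - α₂ * y ^ r) * Δ := by
  intro z
  set F : ℝ → ℝ := fun y => (1 - Δ * α₁) * y + Δ * α₀ - Δ * αm1 * y⁻¹ + Δ * α₂ * y ^ r with hF
  have hr0 : (0:ℝ) < r := lt_trans one_pos hr
  -- the equation is equivalent to F y = z
  have key : ∀ y : ℝ, (y = z + (αm1 * y⁻¹ - α₀ + α₁ * y - α₂ * y ^ r) * Δ) ↔ F y = z := by
    intro y; constructor <;> intro h
    · simp only [hF]; linarith [h]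
    · simp only [hF] at h; linarith [h]
  -- strict monotonicity of F on (0, ∞)
  have hmono : StrictMonoOn F (Ioi (0:ℝ)) := by
    intro x hx y hy hxy
    simp only [mem_Ioi] at hx hy
    have h1 : (1 - Δ * α₁) * x ≤ (1 - Δ * α₁) * y :=
      mul_le_mul_of_nonneg_left hxy.le (by linarith)
    have h2 : y⁻¹ < x⁻¹ := by
      rw [inv_lt_inv₀ hy hx]; exact hxy
    have h2' : -(Δ * αm1 * x⁻¹) < -(Δ * αm1 * y⁻¹) := by
      have := mul_lt_mul_of_pos_left h2 (mul_pos hΔ hαm1)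
      linarith
    have h3 : Δ * α₂ * x ^ r < Δ * α₂ * y ^ r :=
      mul_lt_mul_of_pos_left (Real.rpow_lt_rpow hx.le hxy hr0) (mul_pos hΔ hα₂)
    simp only [hF]; linarith
  -- continuity of F on (0, ∞)
  have hrpow : Continuous fun y : ℝ => y ^ r := by
    rw [continuous_iff_continuousAt]
    exact fun x => Real.continuousAt_rpow_const x r (Or.inr hr0.le)
  have hcont : ContinuousOn F (Ioi (0:ℝ)) := by
    apply ContinuousOn.add
    apply ContinuousOn.sub
    · exact ((continuous_const.mul continuous_id).add continuous_const).continuousOn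
    · exact continuousOn_const.mul (continuousOn_inv₀.mono (fun x hx => ne_of_gt hx))
    · exact continuousOn_const.mul hrpow.continuousOn
  -- F tends to -∞ as y → 0⁺
  have hbot : Tendsto F (𝓝[>] (0:ℝ)) atBot := by
    have h1 : Tendsto (fun y : ℝ => -(Δ * αm1) * y⁻¹) (𝓝[>] (0:ℝ)) atBot :=
      tendsto_inv_nhdsGT_zero.const_mul_atTop_of_neg (by nlinarith)
    have h2 : Tendsto (fun y : ℝ => (1 - Δ * α₁) * y + Δ * α₀ + Δ * α₂ * y ^ r)
        (𝓝[>] (0:ℝ)) (𝓝 ((1 - Δ * α₁) * 0 + Δ * α₀ + Δ * α₂ * 0 ^ r)) := by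
      apply Tendsto.mono_left _ nhdsWithin_le_nhds
      exact (((continuous_const.mul continuous_id).add continuous_const).add
        (continuous_const.mul hrpow)).tendsto 0
    have := h2.add_atBot h1
    apply this.congr
    intro y; simp only [hF]; ring
  -- F tends to ∞ as y → ∞
  have htop : Tendsto F atTop atTop := by
    have h1 : Tendsto (fun y : ℝ => Δ * α₂ * y ^ r) atTop atTop :=
      (tendsto_rpow_atTop hr0).const_mul_atTop (mul_pos hΔ hα₂)
    have h2 : Tendsto (fun y : ℝ => Δ * α₀ - Δ * αm1 * y⁻¹) atTop (𝓝 (Δ * α₀ - Δ * αm1 * 0)) :=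
      tendsto_const_nhds.sub (tendsto_const_nhds.mul tendsto_inv_atTop_zero)
    have h3 := h2.add_atTop h1
    apply tendsto_atTop_mono' _ _ h3
    filter_upwards [eventually_gt_atTop (0:ℝ)] with y hy
    have : 0 ≤ (1 - Δ * α₁) * y := mul_nonneg (by linarith) hy.le
    simp only [hF]; linarith
  -- find a with F a < z
  obtain ⟨a, haz, ha⟩ : ∃ a, F a < z ∧ a ∈ Ioi (0:ℝ) := by
    have := (hbot.eventually (eventually_lt_atBot z)).and self_mem_nhdsWithin
    exact this.exists
  -- find b > a with z < F b
  obtain ⟨b, hbz, hab⟩ : ∃ b, z < F b ∧ a < b :=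
    ((htop.eventually (eventually_gt_atTop z)).and (eventually_gt_atTop a)).exists
  have ha0 : (0:ℝ) < a := ha
  have hb0 : (0:ℝ) < b := lt_trans ha0 hab
  -- IVT on [a, b]
  have hsub : Icc a b ⊆ Ioi (0:ℝ) := fun x hx => lt_of_lt_of_le ha0 hx.1
  have := intermediate_value_Icc hab.le (hcont.mono hsub)
  have hz : z ∈ Icc (F a) (F b) := ⟨haz.le, hbz.le⟩
  obtain ⟨y, hy, hFy⟩ := this hz
  have hy0 : 0 < y := lt_of_lt_of_le ha0 hy.1
  refine ⟨y, ⟨hy0, (key y).mpr hFy⟩, ?_⟩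
  rintro w ⟨hw0, hw⟩
  have hFw : F w = z := (key w).mp hw
  exact hmono.injOn hw0 hy0 (hFw.trans hFy.symm)
end

section
/- Let κ, λ, θ, Δ > 0 with 4κλ ≥ θ², let z ≥ 0 and w ∈ ℝ. Define z' := (1/(1 + κΔ))·( (√z + (θ/2)·w)² + (κλ − θ²/4)·Δ ). Then z' ≥ 0 and z' satisfies the drift-implicit Milstein relation z' = z + κ(λ − z')·Δ + θ·√z·w + (θ²/4)·(w² − Δ). -/
/-- The drift-implicit Milstein scheme for the CIR process can be written in the stated explicit
form, which is non-negative when `4κλ ≥ θ²`, and satisfies the drift-implicit Milstein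
relation. -/
theorem drift_implicit_milstein_explicit_form
    (κ lam θ Δ z w : ℝ) (hκ : 0 < κ) (hlam : 0 < lam) (hθ : 0 < θ) (hΔ : 0 < Δ)
    (hcond : θ ^ 2 ≤ 4 * κ * lam) (hz : 0 ≤ z)
    (z' : ℝ)
    (hz' : z' = (1 / (1 + κ * Δ))
        * ((Real.sqrt z + (θ / 2) * w) ^ 2 + (κ * lam - θ ^ 2 / 4) * Δ)) :
    0 ≤ z' ∧
      z' = z + κ * (lam - z') * Δ + θ * Real.sqrt z * w + (θ ^ 2 / 4) * (w ^ 2 - Δ) := by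
  have hpos : (0:ℝ) < 1 + κ * Δ := by positivity
  have hsq : Real.sqrt z ^ 2 = z := Real.sq_sqrt hz
  constructor
  · rw [hz']
    apply mul_nonneg (by positivity)
    have : 0 ≤ (κ * lam - θ ^ 2 / 4) * Δ := by nlinarith
    nlinarith [sq_nonneg (Real.sqrt z + (θ / 2) * w)]
  · have h := hz'
    field_simp at h ⊢
    nlinarith [h, hsq]
end

section
/- Let κ, λ, θ, Δ > 0 with 2κλ > θ² and set α = (4κλ − θ²)/8. For x ≥ 0 and w ∈ ℝ define s(x, w) = (√x + (θ/2)w)/(2(1 + κΔ/2)) + sqrt( (√x + (θ/2)w)²/(4(1 + κΔ/2)²) + αΔ/(1 + κΔ/2) ), the drift-implicit square-root Euler flow φ_X(x, w) = s(x, w)², and the drift-implicit Milstein flow φ_Z(x, w) = (1/(1 + κΔ))·( (√x + (θ/2)w)² + (κλ − θ²/4)·Δ ). Then for all x ≥ 0 and w ∈ ℝ, φ_Z(x, w) = φ_X(x, w) + (Δ²/(1 + κΔ))·( α/s(x, w) − (κ/2)·s(x, w) )², and in particular φ_Z(x, w) ≥ φ_X(x, w). -/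
set_option maxHeartbeats 1000000


/-- The drift-implicit Milstein flow equals the drift-implicit square-root Euler flow plus an
explicit non-negative second-order term; in particular `φ_Z ≥ φ_X`. -/
theorem drift_implicit_milstein_flow_dominates
    (κ lam θ Δ : ℝ) (hκ : 0 < κ) (hlam : 0 < lam) (hθ : 0 < θ) (hΔ : 0 < Δ)
    (hcond : θ ^ 2 < 2 * κ * lam)
    (α : ℝ) (hα : α = (4 * κ * lam - θ ^ 2) / 8)
    (s : ℝ → ℝ → ℝ)
    (hs : ∀ x w : ℝ, s x w
      = (Real.sqrt x + (θ / 2) * w) / (2 * (1 + κ * Δ / 2))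
        + Real.sqrt ((Real.sqrt x + (θ / 2) * w) ^ 2 / (4 * (1 + κ * Δ / 2) ^ 2)
            + α * Δ / (1 + κ * Δ / 2)))
    (φX : ℝ → ℝ → ℝ) (hφX : ∀ x w : ℝ, φX x w = (s x w) ^ 2)
    (φZ : ℝ → ℝ → ℝ)
    (hφZ : ∀ x w : ℝ, φZ x w
      = (1 / (1 + κ * Δ))
          * ((Real.sqrt x + (θ / 2) * w) ^ 2 + (κ * lam - θ ^ 2 / 4) * Δ)) :
    ∀ x w : ℝ, 0 ≤ x →
      φZ x w = φX x w + (Δ ^ 2 / (1 + κ * Δ)) * (α / s x w - (κ / 2) * s x w) ^ 2 ∧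
        φX x w ≤ φZ x w := by
  intro x w hx
  have hαpos : 0 < α := by
    rw [hα]; nlinarith [hθ.le, sq_nonneg θ]
  have hc : (0:ℝ) < 1 + κ * Δ / 2 := by nlinarith
  have hcΔ : (0:ℝ) < 1 + κ * Δ := by nlinarith
  set c : ℝ := 1 + κ * Δ / 2 with hcdef
  set u : ℝ := Real.sqrt x + (θ / 2) * w with hudef
  have harg : 0 ≤ u ^ 2 / (4 * c ^ 2) + α * Δ / c := by positivity
  set r : ℝ := Real.sqrt (u ^ 2 / (4 * c ^ 2) + α * Δ / c) with hrdef
  have hr0 : 0 ≤ r := Real.sqrt_nonneg _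
  have hr2 : r ^ 2 = u ^ 2 / (4 * c ^ 2) + α * Δ / c := Real.sq_sqrt harg
  have hsxw : s x w = u / (2 * c) + r := hs x w
  have hr2' : 4 * c ^ 2 * r ^ 2 = u ^ 2 + 4 * c * (α * Δ) := by
    rw [hr2]; field_simp [hc.ne']
  have hspos : 0 < s x w := by
    have h2 : 0 < u + 2 * c * r := by
      nlinarith [hr2', mul_pos (mul_pos hc hαpos) hΔ, mul_nonneg hc.le hr0]
    have h3 : u / (2 * c) + r = (u + 2 * c * r) / (2 * c) := by
      field_simp [hc.ne']
    rw [hsxw, h3]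
    exact div_pos h2 (by positivity)
  have hsne : s x w ≠ 0 := ne_of_gt hspos
  -- key quadratic identity
  have hkey : c * (s x w) ^ 2 = u * s x w + α * Δ := by
    rw [hsxw]
    linear_combination (norm := skip) (1 / (4 * c)) * hr2'
    field_simp [hc.ne']
    ring
  have hu : u = (c * (s x w) ^ 2 - α * Δ) / s x w := by
    field_simp
    linarith [hkey]
  have h2α : κ * lam - θ ^ 2 / 4 = 2 * α := by rw [hα]; ring
  have heq : φZ x w = φX x w + (Δ ^ 2 / (1 + κ * Δ)) * (α / s x w - (κ / 2) * s x w) ^ 2 := by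
    rw [hφZ, hφX, h2α, ← hudef, hu, hcdef]
    field_simp
    ring
  refine ⟨heq, ?_⟩
  rw [heq]
  have : 0 ≤ (Δ ^ 2 / (1 + κ * Δ)) * (α / s x w - (κ / 2) * s x w) ^ 2 := by positivity
  linarith
end

section
/- Let κ, λ, θ, Δ > 0 with 2κλ > θ², let x₀ > 0 and set α = (4κλ − θ²)/8. For x ≥ 0 and w ∈ ℝ define s(x, w) = (√x + (θ/2)w)/(2(1 + κΔ/2)) + sqrt( (√x + (θ/2)w)²/(4(1 + κΔ/2)²) + αΔ/(1 + κΔ/2) ), the drift-implicit square-root Euler flow φ_X(x, w) = s(x, w)², and the drift-implicit Milstein flow φ_Z(x, w) = (1/(1 + κΔ))·( (√x + (θ/2)w)² + (κλ − θ²/4)·Δ ). Let (w_k)_{k ≥ 0} be any sequence of real numbers and define X̄_0 = Z̄_0 = x₀, X̄_{k+1} = φ_X(X̄_k, w_k) and Z̄_{k+1} = φ_Z(Z̄_k, w_k) for k ≥ 0. Then Z̄_k ≥ X̄_k ≥ 0 for all k ≥ 0. -/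
/-- Monotonicity of `b ↦ b + √(b² + d)` for `d ≥ 0`. -/
lemma aux_sqrt_mono (d b₁ b₂ : ℝ) (hd : 0 ≤ d) (h : b₁ ≤ b₂) :
    b₁ + Real.sqrt (b₁ ^ 2 + d) ≤ b₂ + Real.sqrt (b₂ ^ 2 + d) := by
  have h1 : 0 ≤ b₁ ^ 2 + d := by positivity
  have h2 : 0 ≤ b₂ ^ 2 + d := by positivity
  set S₁ := Real.sqrt (b₁ ^ 2 + d) with hS₁
  set S₂ := Real.sqrt (b₂ ^ 2 + d) with hS₂
  have hs1 : S₁ ^ 2 = b₁ ^ 2 + d := Real.sq_sqrt h1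
  have hs2 : S₂ ^ 2 = b₂ ^ 2 + d := Real.sq_sqrt h2
  have hb1 : -b₁ ≤ S₁ := by
    have := Real.sqrt_le_sqrt (by nlinarith : b₁ ^ 2 ≤ b₁ ^ 2 + d)
    have h' : |b₁| ≤ S₁ := by rw [hS₁]; simpa [Real.sqrt_sq_eq_abs] using this
    linarith [neg_abs_le b₁]
  have hb2 : -b₂ ≤ S₂ := by
    have := Real.sqrt_le_sqrt (by nlinarith : b₂ ^ 2 ≤ b₂ ^ 2 + d)
    have h' : |b₂| ≤ S₂ := by rw [hS₂]; simpa [Real.sqrt_sq_eq_abs] using this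
    linarith [neg_abs_le b₂]
  have hS1nn : 0 ≤ S₁ := Real.sqrt_nonneg _
  have hS2nn : 0 ≤ S₂ := Real.sqrt_nonneg _
  nlinarith [mul_nonneg (sub_nonneg.mpr h) (add_nonneg hS1nn hS2nn),
    sq_nonneg (S₁ - S₂), sq_nonneg (S₁ + S₂)]


/-- Positivity of `b + √(b² + c)` for `c > 0`. -/
lemma aux_sqrt_pos (b c : ℝ) (hc : 0 < c) : 0 < b + Real.sqrt (b ^ 2 + c) := by
  have h1 : b ^ 2 < b ^ 2 + c := by linarith
  have h2 : |b| < Real.sqrt (b ^ 2 + c) := by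
    calc |b| = Real.sqrt (b ^ 2) := (Real.sqrt_sq_eq_abs b).symm
      _ < _ := Real.sqrt_lt_sqrt (by positivity) h1
  have h3 := neg_abs_le b
  linarith

/-- Pathwise domination of the drift-implicit square-root Euler scheme by the drift-implicit
Milstein scheme for the CIR process, when both are driven by the same increments. -/
theorem drift_implicit_milstein_dominates_sqrt_euler
    (κ lam θ Δ x₀ : ℝ) (hκ : 0 < κ) (hlam : 0 < lam) (hθ : 0 < θ) (hΔ : 0 < Δ)
    (hcond : θ ^ 2 < 2 * κ * lam) (hx₀ : 0 < x₀)
    (α : ℝ) (hα : α = (4 * κ * lam - θ ^ 2) / 8)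
    (s : ℝ → ℝ → ℝ)
    (hs : ∀ x w : ℝ, s x w
      = (Real.sqrt x + (θ / 2) * w) / (2 * (1 + κ * Δ / 2))
        + Real.sqrt ((Real.sqrt x + (θ / 2) * w) ^ 2 / (4 * (1 + κ * Δ / 2) ^ 2)
            + α * Δ / (1 + κ * Δ / 2)))
    (φX : ℝ → ℝ → ℝ) (hφX : ∀ x w : ℝ, φX x w = (s x w) ^ 2)
    (φZ : ℝ → ℝ → ℝ)
    (hφZ : ∀ x w : ℝ, φZ x w
      = (1 / (1 + κ * Δ))
          * ((Real.sqrt x + (θ / 2) * w) ^ 2 + (κ * lam - θ ^ 2 / 4) * Δ))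
    (w : ℕ → ℝ) (X Z : ℕ → ℝ)
    (hX0 : X 0 = x₀) (hZ0 : Z 0 = x₀)
    (hXrec : ∀ k : ℕ, X (k + 1) = φX (X k) (w k))
    (hZrec : ∀ k : ℕ, Z (k + 1) = φZ (Z k) (w k)) :
    ∀ k : ℕ, 0 ≤ X k ∧ X k ≤ Z k := by
  have ha : (0:ℝ) < 1 + κ * Δ / 2 := by positivity
  have ha' : (0:ℝ) < 1 + κ * Δ := by positivity
  have hα' : 0 < α := by rw [hα]; nlinarith
  have hane : (1 + κ * Δ / 2) ≠ 0 := ne_of_gt ha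
  -- clean representation of s
  have hrep : ∀ x v : ℝ, s x v
      = ((Real.sqrt x + (θ / 2) * v)
          + Real.sqrt ((Real.sqrt x + (θ / 2) * v) ^ 2 + 4 * (1 + κ * Δ / 2) * (α * Δ)))
        / (2 * (1 + κ * Δ / 2)) := by
    intro x v
    rw [hs x v]
    set b := Real.sqrt x + (θ / 2) * v with hb
    have harg : b ^ 2 / (4 * (1 + κ * Δ / 2) ^ 2) + α * Δ / (1 + κ * Δ / 2)
        = (b ^ 2 + 4 * (1 + κ * Δ / 2) * (α * Δ)) / (2 * (1 + κ * Δ / 2)) ^ 2 := by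
      field_simp; ring
    rw [harg, Real.sqrt_div (by positivity) _,
      Real.sqrt_sq (by positivity : (0:ℝ) ≤ 2 * (1 + κ * Δ / 2))]
    ring
  -- positivity of s
  have hspos : ∀ x v : ℝ, 0 < s x v := by
    intro x v
    rw [hrep x v]
    have hnum := aux_sqrt_pos (Real.sqrt x + (θ / 2) * v)
      (4 * (1 + κ * Δ / 2) * (α * Δ)) (by positivity)
    positivity
  -- key quadratic identity for s
  have hkey : ∀ x v : ℝ,
      (1 + κ * Δ / 2) * (s x v) ^ 2
        = (Real.sqrt x + (θ / 2) * v) * s x v + α * Δ := by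
    intro x v
    rw [hrep x v]
    set b := Real.sqrt x + (θ / 2) * v with hb
    have hTnn : 0 ≤ b ^ 2 + 4 * (1 + κ * Δ / 2) * (α * Δ) := by positivity
    set T := Real.sqrt (b ^ 2 + 4 * (1 + κ * Δ / 2) * (α * Δ)) with hT
    have hT2 : T ^ 2 = b ^ 2 + 4 * (1 + κ * Δ / 2) * (α * Δ) := Real.sq_sqrt hTnn
    field_simp
    linear_combination hT2
  -- monotonicity of s in x
  have hsmono : ∀ x z v : ℝ, x ≤ z → s x v ≤ s z v := by
    intro x z v hxz
    rw [hrep x v, hrep z v]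
    set b₁ := Real.sqrt x + (θ / 2) * v with hb1
    set b₂ := Real.sqrt z + (θ / 2) * v with hb2
    have hb : b₁ ≤ b₂ := by
      have := Real.sqrt_le_sqrt hxz
      simp only [hb1, hb2]; linarith
    have hnum := aux_sqrt_mono (4 * (1 + κ * Δ / 2) * (α * Δ)) b₁ b₂ (by positivity) hb
    exact div_le_div_of_nonneg_right hnum (by positivity) |>.trans_eq rfl
  -- φX ≤ φZ pointwise
  have hXZ : ∀ x v : ℝ, φX x v ≤ φZ x v := by
    intro x v
    have hk := hkey x v
    have hsq := sq_nonneg ((Real.sqrt x + (θ / 2) * v) - s x v)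
    have h2α : (κ * lam - θ ^ 2 / 4) * Δ = 2 * (α * Δ) := by rw [hα]; ring
    rw [hφX, hφZ, div_mul_eq_mul_div, one_mul, le_div_iff₀ ha']
    nlinarith [hk, hsq, h2α]
  -- induction
  intro k
  induction k with
  | zero => constructor <;> simp [hX0, hZ0, le_of_lt hx₀]
  | succ n ih =>
    obtain ⟨h0, hle⟩ := ih
    constructor
    · rw [hXrec n, hφX]; exact sq_nonneg _
    · rw [hXrec n, hZrec n]
      calc φX (X n) (w n) ≤ φX (Z n) (w n) := by
            rw [hφX, hφX]
            exact pow_le_pow_left₀ (le_of_lt (hspos _ _)) (hsmono _ _ _ hle) 2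
        _ ≤ φZ (Z n) (w n) := hXZ _ _
end
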